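/- Let r be a positive integer and let f(t) = ∑_j f_j t^j be a generalized polynomial with nonnegative real coefficients and exponents in (1/r)ℤ≥0. For n ∈ ℤ>0 let f*_n(t) := Ψ(f(t)^n), where Ψ rounds up exponents. Then for every real number x with 0 < x ≤ 1 and every n ≥ 1: f*_n(x) ≤ f(x)^n ≤ x^(1/r - 1) · f*_n(x). -/

import Mathlib

open Finsupp

/-- Evaluation of a generalized polynomial `∑ c_j t^j` (a finitely supported
function `ℚ →₀ ℝ`, with convolution product) at a positive real `x`, using
real exponentiation. -/
noncomputable def gpEval (f : AddMonoidAlgebra ℝ ℚ) (x : ℝ) : ℝ :=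
  f.coeff.sum fun j c => c * x ^ (j : ℝ)

/-- The linear rounding operator `Ψ` with `Ψ(t^j) = t^⌈j⌉`. -/
noncomputable def gpPsi (f : AddMonoidAlgebra ℝ ℚ) : AddMonoidAlgebra ℝ ℚ :=
  AddMonoidAlgebra.ofCoeff (Finsupp.mapDomain (fun j => (⌈j⌉ : ℚ)) f.coeff)

/-! Evaluation at `x > 0` is multiplicative, so `f(x)^n = g(x)` for `g = f^n`, which again has
nonnegative coefficients and exponents in `(1/r)ℕ`. For `0 < x ≤ 1` the map `t ↦ x^t` is
antitone, so both inequalities can be compared term by term using `j ≤ ⌈j⌉ ≤ j + 1 - 1/r`,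
the upper bound holding because `r⌈j⌉` and `rj` are integers with `r⌈j⌉ < rj + r`. -/

open AddMonoidAlgebra

section Coefficients

variable {k G : Type*} [Semiring k] [AddMonoid G]

lemma coeff_pow_nonneg [PartialOrder k] [IsOrderedRing k] {f : AddMonoidAlgebra k G}
    (hf : ∀ j, 0 ≤ f.coeff j) (n : ℕ) (j : G) : 0 ≤ (f ^ n).coeff j := by
  classical
  induction n generalizing j with
  | zero =>
    rw [pow_zero, one_def, coeff_single, Finsupp.single_apply]
    split <;> simp
  | succ n ih =>
    rw [pow_succ, coeff_mul]
    exact Finsupp.sum_nonneg fun a _ => Finsupp.sum_nonneg fun b _ => by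
      split
      · exact mul_nonneg (ih a) (hf b)
      · exact le_rfl

lemma support_coeff_pow_subset (S : AddSubmonoid G) {f : AddMonoidAlgebra k G}
    (hf : ↑f.coeff.support ⊆ (S : Set G)) (n : ℕ) : ↑(f ^ n).coeff.support ⊆ (S : Set G) := by
  classical
  induction n with
  | zero =>
    rw [pow_zero]
    exact (Finset.coe_subset.2 (support_coeff_one_subset (k := k))).trans (by simp)
  | succ n ih =>
    rw [pow_succ]
    refine (Finset.coe_subset.2 (support_coeff_mul_subset _ _)).trans ?_
    rw [Finset.coe_add]
    exact AddSubmonoid.add_subset ih hf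

end Coefficients

noncomputable def gpEvalAlgHom {x : ℝ} (hx : 0 < x) : AddMonoidAlgebra ℝ ℚ →ₐ[ℝ] ℝ :=
  AddMonoidAlgebra.lift ℝ ℝ ℚ
    { toFun := fun j => x ^ ((Multiplicative.toAdd j : ℚ) : ℝ)
      map_one' := by simp
      map_mul' := fun a b => by
        simp only [toAdd_mul, Rat.cast_add]
        exact Real.rpow_add hx _ _ }

lemma gpEval_eq_gpEvalAlgHom (f : AddMonoidAlgebra ℝ ℚ) {x : ℝ} (hx : 0 < x) :
    gpEval f x = gpEvalAlgHom hx f := by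
  simp [gpEvalAlgHom, AddMonoidAlgebra.lift_apply, gpEval, smul_eq_mul]

lemma gpEval_pow (f : AddMonoidAlgebra ℝ ℚ) {x : ℝ} (hx : 0 < x) (n : ℕ) :
    gpEval (f ^ n) x = gpEval f x ^ n := by
  rw [gpEval_eq_gpEvalAlgHom _ hx, gpEval_eq_gpEvalAlgHom _ hx, map_pow]

lemma gpEval_gpPsi (g : AddMonoidAlgebra ℝ ℚ) (x : ℝ) :
    gpEval (gpPsi g) x = g.coeff.sum fun j c => c * x ^ ((⌈j⌉ : ℚ) : ℝ) := by
  rw [gpEval, gpPsi, coeff_ofCoeff]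
  exact Finsupp.sum_mapDomain_index (by simp) (fun _ _ _ => add_mul _ _ _)

lemma ceil_add_one_div_sub_one_le_of_mem_multiples (r : ℕ) {j : ℚ}
    (hj : j ∈ AddSubmonoid.multiples (1 / r : ℚ)) : (⌈j⌉ : ℚ) + (1 / r - 1) ≤ j := by
  obtain ⟨i, rfl⟩ := (AddSubmonoid.mem_multiples_iff _ _).1 hj
  rcases r.eq_zero_or_pos with rfl | hr
  · simp
  have hr' : (0 : ℚ) < r := by exact_mod_cast hr
  rw [nsmul_eq_mul, mul_one_div]
  set c := ⌈(i : ℚ) / r⌉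
  have hlt : ((c : ℚ) - 1) * r < i := by
    rw [← lt_div_iff₀ hr']
    linarith [Int.ceil_lt_add_one ((i : ℚ) / r)]
  have hle : ((c : ℚ) - 1) * r ≤ (i : ℚ) - 1 := by
    have : (c - 1) * (r : ℤ) < i := by exact_mod_cast hlt
    exact_mod_cast Int.le_sub_one_of_lt this
  have hdiv : (c : ℚ) - 1 ≤ (i : ℚ) / r - 1 / r := by
    rw [← sub_div, le_div_iff₀ hr']
    exact hle
  linarith

section Evaluation

variable {x : ℝ} (hx0 : 0 < x) (hx1 : x ≤ 1)
include hx0 hx1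

lemma gpEval_gpPsi_le {g : AddMonoidAlgebra ℝ ℚ} (hg : ∀ j, 0 ≤ g.coeff j) :
    gpEval (gpPsi g) x ≤ gpEval g x := by
  rw [gpEval_gpPsi, gpEval]
  exact Finset.sum_le_sum fun j _ => mul_le_mul_of_nonneg_left
    (Real.rpow_le_rpow_of_exponent_ge hx0 hx1 (by exact_mod_cast Int.le_ceil j)) (hg j)

lemma gpEval_le_rpow_mul_gpEval_gpPsi (r : ℕ) {g : AddMonoidAlgebra ℝ ℚ}
    (hg : ∀ j, 0 ≤ g.coeff j)
    (hsupp : ↑g.coeff.support ⊆ (AddSubmonoid.multiples (1 / r : ℚ) : Set ℚ)) :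
    gpEval g x ≤ x ^ (1 / (r : ℝ) - 1) * gpEval (gpPsi g) x := by
  rw [gpEval_gpPsi, gpEval, Finsupp.sum, Finsupp.sum, Finset.mul_sum]
  refine Finset.sum_le_sum fun j hj => ?_
  have hexp : ((⌈j⌉ : ℚ) : ℝ) + (1 / (r : ℝ) - 1) ≤ j := by
    have hq := (Rat.cast_le (K := ℝ)).2 (ceil_add_one_div_sub_one_le_of_mem_multiples r (hsupp hj))
    push_cast at hq
    exact hq
  calc g.coeff j * x ^ (j : ℝ)
      ≤ g.coeff j * x ^ (((⌈j⌉ : ℚ) : ℝ) + (1 / (r : ℝ) - 1)) :=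
        mul_le_mul_of_nonneg_left (Real.rpow_le_rpow_of_exponent_ge hx0 hx1 hexp) (hg j)
    _ = x ^ (1 / (r : ℝ) - 1) * (g.coeff j * x ^ ((⌈j⌉ : ℚ) : ℝ)) := by
        rw [Real.rpow_add hx0]; ring

end Evaluation

theorem stmt_3_general (r : ℕ) (f : AddMonoidAlgebra ℝ ℚ)
    (hexp : ∀ j ∈ f.coeff.support, ∃ i : ℕ, j = (i : ℚ) / r)
    (hpos : ∀ j, 0 ≤ f.coeff j)
    (x : ℝ) (hx0 : 0 < x) (hx1 : x ≤ 1) (n : ℕ) :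
    gpEval (gpPsi (f ^ n)) x ≤ gpEval f x ^ n ∧
      gpEval f x ^ n ≤ x ^ (1 / (r : ℝ) - 1) * gpEval (gpPsi (f ^ n)) x := by
  have hsupp : ↑f.coeff.support ⊆ (AddSubmonoid.multiples (1 / r : ℚ) : Set ℚ) := fun j hj => by
    obtain ⟨i, rfl⟩ := hexp j hj
    exact (AddSubmonoid.mem_multiples_iff _ _).2 ⟨i, by rw [nsmul_eq_mul, mul_one_div]⟩
  have hpow_nonneg := coeff_pow_nonneg hpos n
  rw [← gpEval_pow f hx0 n]
  exact ⟨gpEval_gpPsi_le hx0 hx1 hpow_nonneg, gpEval_le_rpow_mul_gpEval_gpPsi hx0 hx1 r hpow_nonneg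
    (support_coeff_pow_subset _ hsupp n)⟩

theorem stmt_3 (r : ℕ) (hr : 0 < r) (f : AddMonoidAlgebra ℝ ℚ)
    (hexp : ∀ j ∈ f.coeff.support, ∃ i : ℕ, j = (i : ℚ) / r)
    (hpos : ∀ j, 0 ≤ f.coeff j)
    (x : ℝ) (hx0 : 0 < x) (hx1 : x ≤ 1) (n : ℕ) (hn : 1 ≤ n) :
    gpEval (gpPsi (f ^ n)) x ≤ gpEval f x ^ n ∧
      gpEval f x ^ n ≤ x ^ (1 / (r : ℝ) - 1) * gpEval (gpPsi (f ^ n)) x :=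
  stmt_3_general r f hexp hpos x hx0 hx1 n
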